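/- arXiv:1106.4477 — 5 statements merged into one kernel-verified Lean document; each statement's English description precedes it below -/
import Mathlib

section
/- Let V be an absolutely simple object in an additive pivotal k-category, and fix a decomposition V⊗V* = ⊕_{k∈I} W_k into indecomposable summands with idempotents e_k. Then there exists a unique index j ∈ I such that e_j ∘ coev_V = coev_V. -/
open CategoryTheory Category MonoidalCategory

universe v u

class PivotalData (C : Type u) [Category.{v} C] [MonoidalCategory C] where
  dual : C → C
  coev : ∀ V : C, 𝟙_ C ⟶ V ⊗ dual V
  ev : ∀ V : C, dual V ⊗ V ⟶ 𝟙_ C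
  coev' : ∀ V : C, 𝟙_ C ⟶ dual V ⊗ V
  ev' : ∀ V : C, V ⊗ dual V ⟶ 𝟙_ C
  zig₁ : ∀ V : C, (𝟙 V ⊗≫ (coev V ▷ V) ⊗≫ (V ◁ ev V) ⊗≫ 𝟙 V : V ⟶ V) = 𝟙 V
  zig₂ : ∀ V : C,
    (𝟙 (dual V) ⊗≫ (dual V ◁ coev V) ⊗≫ (ev V ▷ dual V) ⊗≫ 𝟙 (dual V) : dual V ⟶ dual V) =
      𝟙 (dual V)
  zig₃ : ∀ V : C,
    (𝟙 (dual V) ⊗≫ (coev' V ▷ dual V) ⊗≫ (dual V ◁ ev' V) ⊗≫ 𝟙 (dual V) : dual V ⟶ dual V) =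
      𝟙 (dual V)
  zig₄ : ∀ V : C, (𝟙 V ⊗≫ (V ◁ coev' V) ⊗≫ (ev' V ▷ V) ⊗≫ 𝟙 V : V ⟶ V) = 𝟙 V

namespace PivotalData

variable {C : Type u} [Category.{v} C] [MonoidalCategory C] [PivotalData C]

/-- The left-duality transpose `f^*` of a morphism. -/
noncomputable def transpose {V W : C} (f : V ⟶ W) : dual W ⟶ dual V :=
  𝟙 (dual W) ⊗≫ (dual W ◁ coev V) ⊗≫ (dual W ◁ (f ▷ dual V)) ⊗≫ (ev W ▷ dual V) ⊗≫ 𝟙 (dual V)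

/-- The right-duality transpose `f^•` of a morphism. -/
noncomputable def transpose' {V W : C} (f : V ⟶ W) : dual W ⟶ dual V :=
  𝟙 (dual W) ⊗≫ (coev' V ▷ dual W) ⊗≫ (dual V ◁ (f ▷ dual W)) ⊗≫ (dual V ◁ ev' W) ⊗≫ 𝟙 (dual V)

/-- The canonical map `γ_{V,W} : W^* ⊗ V^* ⟶ (V ⊗ W)^*` built from the left duality. -/
noncomputable def gamma (V W : C) : dual W ⊗ dual V ⟶ dual (V ⊗ W) :=
  𝟙 (dual W ⊗ dual V) ⊗≫ ((dual W ⊗ dual V) ◁ coev (V ⊗ W)) ⊗≫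
    (dual W ◁ (ev V ▷ (W ⊗ dual (V ⊗ W)))) ⊗≫ (ev W ▷ dual (V ⊗ W)) ⊗≫ 𝟙 (dual (V ⊗ W))

/-- The canonical map `γ'_{V,W} : W^* ⊗ V^* ⟶ (V ⊗ W)^*` built from the right duality. -/
noncomputable def gamma' (V W : C) : dual W ⊗ dual V ⟶ dual (V ⊗ W) :=
  𝟙 (dual W ⊗ dual V) ⊗≫ (coev' (V ⊗ W) ▷ (dual W ⊗ dual V)) ⊗≫
    (dual (V ⊗ W) ◁ (V ◁ (ev' W ▷ dual V))) ⊗≫ (dual (V ⊗ W) ◁ ev' V) ⊗≫ 𝟙 (dual (V ⊗ W))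

/-- The pivotal morphism `φ_V = (ev'_V ⊗ Id)(Id_V ⊗ coev_{V^*}) : V ⟶ V^{**}`. -/
noncomputable def phi (V : C) : V ⟶ dual (dual V) :=
  𝟙 V ⊗≫ (V ◁ coev (dual V)) ⊗≫ (ev' V ▷ dual (dual V)) ⊗≫ 𝟙 (dual (dual V))

/-- The canonical inverse of the pivotal morphism `φ_V`. -/
noncomputable def phiInv (V : C) : dual (dual V) ⟶ V :=
  𝟙 (dual (dual V)) ⊗≫ (coev V ▷ dual (dual V)) ⊗≫ (V ◁ ev' (dual V)) ⊗≫ 𝟙 V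

end PivotalData

/-- A pivotal category: compatible left and right dualities. -/
class Pivotal (C : Type u) [Category.{v} C] [MonoidalCategory C] extends PivotalData C where
  transpose_eq : ∀ {V W : C} (f : V ⟶ W), PivotalData.transpose f = PivotalData.transpose' f
  gamma_eq : ∀ V W : C, PivotalData.gamma V W = PivotalData.gamma' V W
  gamma_isIso : ∀ V W : C, IsIso (PivotalData.gamma V W)

attribute [instance] Pivotal.gamma_isIso

open PivotalData in
/-- `V` is right ambidextrous:
`f ∘ coev_V = (φ_V⁻¹ ⊗ Id) ∘ f^* ∘ coev'_{V^*}` for all `f ∈ End(V ⊗ V^*)`,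
where `f^*` is transported along the canonical isomorphism `γ` identifying
`V^{**} ⊗ V^*` with `(V ⊗ V^*)^*`. -/
noncomputable def RightAmbi {C : Type u} [Category.{v} C] [MonoidalCategory C] [Pivotal C]
    (V : C) : Prop :=
  ∀ f : V ⊗ PivotalData.dual V ⟶ V ⊗ PivotalData.dual V,
    coev V ≫ f =
      coev' (dual V) ≫ gamma V (dual V) ≫ transpose f ≫ inv (gamma V (dual V)) ≫
        (phiInv V ▷ dual V)

/-- `V` is absolutely simple: scalars give all endomorphisms. -/
def AbsSimple (k : Type*) [Field k] {C : Type u} [Category.{v} C] [Preadditive C]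
    [CategoryTheory.Linear k C] (V : C) : Prop :=
  Function.Bijective (fun α : k => α • 𝟙 V)

/-- `W` is absolutely indecomposable with nilpotent radical:
every endomorphism is a scalar plus a nilpotent, and `W` is nonzero. -/
def AbsIndec (k : Type*) [Field k] {C : Type u} [Category.{v} C] [Preadditive C]
    [CategoryTheory.Linear k C] (W : C) : Prop :=
  (𝟙 W : W ⟶ W) ≠ 0 ∧ ∀ g : End W, ∃ α : k, IsNilpotent (g - α • 1)


section Aux

open PivotalData

/-- Build an `ExactPairing V (dual V)` from the pivotal data. -/
noncomputable def epOfAux {C : Type u} [Category.{v} C] [MonoidalCategory C] [PivotalData C]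
    (V : C) : ExactPairing V (dual V) where
  coevaluation' := coev V
  evaluation' := ev V
  evaluation_coevaluation' := by
    have h := PivotalData.zig₁ V
    calc coev V ▷ V ≫ (α_ _ _ _).hom ≫ V ◁ ev V
        = (λ_ V).hom ≫ (𝟙 V ⊗≫ (coev V ▷ V) ⊗≫ (V ◁ ev V) ⊗≫ 𝟙 V) ≫ (ρ_ V).inv := by
          monoidal
      _ = (λ_ V).hom ≫ (ρ_ V).inv := by rw [h]; simp
  coevaluation_evaluation' := by
    have h := PivotalData.zig₂ V
    calc dual V ◁ coev V ≫ (α_ _ _ _).inv ≫ ev V ▷ dual V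
        = (ρ_ (dual V)).hom ≫
            (𝟙 (dual V) ⊗≫ (dual V ◁ coev V) ⊗≫ (ev V ▷ dual V) ⊗≫ 𝟙 (dual V)) ≫
            (λ_ (dual V)).inv := by
          monoidal
      _ = (ρ_ _).hom ≫ (λ_ _).inv := by rw [h]; simp

lemma keyEAux {C : Type u} [Category.{v} C] [MonoidalCategory C] [PivotalData C] (V : C) :
    letI := epOfAux V
    (tensorRightHomEquiv (𝟙_ C) V (dual V) V) ((λ_ V).hom) = coev V := by
  letI := epOfAux V
  simp [tensorRightHomEquiv]
  rw [← unitors_inv_equal]; simp; rfl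

/-- Every morphism `𝟙 ⟶ V ⊗ V*` is a scalar multiple of the coevaluation when `V`
is absolutely simple. -/
lemma hom_eq_smul_coev (k : Type*) [Field k] {C : Type u} [Category.{v} C] [MonoidalCategory C]
    [Preadditive C] [CategoryTheory.Linear k C] [MonoidalPreadditive C]
    [CategoryTheory.MonoidalLinear k C] [PivotalData C]
    (V : C) (hV : AbsSimple k V) (g : 𝟙_ C ⟶ V ⊗ dual V) :
    ∃ α : k, g = α • coev V := by
  letI := epOfAux V
  set E := tensorRightHomEquiv (𝟙_ C) V (dual V) V with hE
  obtain ⟨α, hα⟩ := hV.2 ((λ_ V).inv ≫ E.symm g)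
  refine ⟨α, ?_⟩
  have hsymm : E.symm g = α • (λ_ V).hom := by
    have : E.symm g = (λ_ V).hom ≫ ((λ_ V).inv ≫ E.symm g) := by simp
    rw [this, ← hα]
    simp
  have hlin : E (α • (λ_ V).hom) = α • E ((λ_ V).hom) := by
    simp [hE, tensorRightHomEquiv, CategoryTheory.Linear.comp_smul]
  calc g = E (E.symm g) := by simp
    _ = E (α • (λ_ V).hom) := by rw [hsymm]
    _ = α • E ((λ_ V).hom) := hlin
    _ = α • coev V := by rw [keyEAux]

end Aux

open PivotalData in
/-- Let `V` be an absolutely simple object in an additive pivotal `k`-category,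
and fix a decomposition `V ⊗ V* = ⊕_{a ∈ ι} W a` into indecomposable summands, with inclusions
`i`, projections `p` and idempotents `e_a = i_a ∘ p_a`.  Then there is a unique index `j` with
`e_j ∘ coev_V = coev_V`. -/
theorem stmt2 (k : Type*) [Field k] (C : Type*) [Category C] [MonoidalCategory C]
    [Preadditive C] [CategoryTheory.Linear k C] [MonoidalPreadditive C]
    [CategoryTheory.MonoidalLinear k C] [Pivotal C]
    (V : C) (hV : AbsSimple k V)
    (ι : Type) [Fintype ι] [DecidableEq ι]
    (W : ι → C) (i : ∀ a, W a ⟶ V ⊗ dual V) (p : ∀ a, V ⊗ dual V ⟶ W a)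
    (hsplit : ∀ a, i a ≫ p a = 𝟙 (W a))
    (horth : ∀ a b, a ≠ b → i a ≫ p b = 0)
    (hsum : ∑ a : ι, p a ≫ i a = 𝟙 (V ⊗ dual V))
    (hindec : ∀ a, AbsIndec k (W a)) :
    ∃! j : ι, coev V ≫ (p j ≫ i j) = coev V := by
  classical
  -- `coev V` is nonzero
  have hid : (𝟙 V : V ⟶ V) ≠ 0 := by
    intro h
    have h01 : (0 : k) • (𝟙 V) = (1 : k) • (𝟙 V) := by rw [h]; simp
    exact one_ne_zero (hV.1 h01).symm
  have hcoev : coev V ≠ 0 := by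
    intro h
    apply hid
    have h1 := PivotalData.zig₁ V
    rw [← h1, h]
    simp [monoidalComp]
  -- uniqueness of scalar coefficients
  have huniq : ∀ α β : k, α • coev V = β • coev V → α = β := by
    intro α β h
    by_contra hne
    apply hcoev
    have hsub : (α - β) • coev V = 0 := by rw [sub_smul, h]; simp
    have : coev V = (α - β)⁻¹ • ((α - β) • coev V) := by
      rw [inv_smul_smul₀ (sub_ne_zero.mpr hne)]
    rw [this, hsub, smul_zero]
  -- the scalars
  choose lam hlam using fun a => hom_eq_smul_coev k V hV (coev V ≫ (p a ≫ i a))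
  have hidem : ∀ a, (p a ≫ i a) ≫ (p a ≫ i a) = p a ≫ i a := by
    intro a
    rw [Category.assoc, ← Category.assoc (i a), hsplit]
    simp
  have horth2 : ∀ a b, a ≠ b → (p a ≫ i a) ≫ (p b ≫ i b) = 0 := by
    intro a b hab
    rw [Category.assoc, ← Category.assoc (i a), horth a b hab]
    simp
  have hsq : ∀ a, lam a * lam a = lam a := by
    intro a
    apply huniq
    calc (lam a * lam a) • coev V = lam a • (lam a • coev V) := by rw [mul_smul]
      _ = lam a • (coev V ≫ (p a ≫ i a)) := by rw [← hlam a]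
      _ = (lam a • coev V) ≫ (p a ≫ i a) := by rw [CategoryTheory.Linear.smul_comp]
      _ = (coev V ≫ (p a ≫ i a)) ≫ (p a ≫ i a) := by rw [← hlam a]
      _ = coev V ≫ ((p a ≫ i a) ≫ (p a ≫ i a)) := by simp
      _ = coev V ≫ (p a ≫ i a) := by rw [hidem a]
      _ = lam a • coev V := hlam a
  have hprod : ∀ a b, a ≠ b → lam a * lam b = 0 := by
    intro a b hab
    apply huniq
    calc (lam a * lam b) • coev V = lam b • (lam a • coev V) := by
          rw [mul_comm, mul_smul]
      _ = lam b • (coev V ≫ (p a ≫ i a)) := by rw [← hlam a]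
      _ = (lam b • coev V) ≫ (p a ≫ i a) := by rw [CategoryTheory.Linear.smul_comp]
      _ = (coev V ≫ (p b ≫ i b)) ≫ (p a ≫ i a) := by rw [← hlam b]
      _ = coev V ≫ ((p b ≫ i b) ≫ (p a ≫ i a)) := by simp
      _ = 0 := by rw [horth2 b a (Ne.symm hab)]; simp
      _ = (0 : k) • coev V := by simp
  have hsumlam : ∑ a : ι, lam a = 1 := by
    apply huniq
    calc (∑ a : ι, lam a) • coev V = ∑ a : ι, lam a • coev V := by rw [Finset.sum_smul]
      _ = ∑ a : ι, coev V ≫ (p a ≫ i a) := by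
          refine Finset.sum_congr rfl fun a _ => (hlam a).symm
      _ = coev V ≫ ∑ a : ι, p a ≫ i a := by rw [Preadditive.comp_sum]
      _ = coev V := by rw [hsum]; simp
      _ = (1 : k) • coev V := by simp
  have hex : ∃ j : ι, lam j ≠ 0 := by
    by_contra hno
    push_neg at hno
    apply one_ne_zero (α := k)
    rw [← hsumlam]
    exact Finset.sum_eq_zero fun a _ => hno a
  obtain ⟨j, hj⟩ := hex
  have hj1 : lam j = 1 := by
    have h := hsq j
    have : lam j * lam j = lam j * 1 := by rw [h, mul_one]
    exact mul_left_cancel₀ hj this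
  refine ⟨j, ?_, ?_⟩
  · show coev V ≫ (p j ≫ i j) = coev V
    rw [hlam j, hj1, one_smul]
  · intro j' hj'
    have hj'' : coev V ≫ (p j' ≫ i j') = coev V := hj'
    have hj'1 : lam j' = 1 := by
      apply huniq
      rw [← hlam j', hj'', one_smul]
    by_contra hne
    have h0 := hprod j' j hne
    rw [hj'1, hj1] at h0
    simp at h0
end

section
/- Let V be an absolutely simple object in an additive pivotal k-category with V⊗V* = ⊕_{k∈I} W_k a decomposition into indecomposables. Then there exists a unique index j' ∈ I such that ev~_V ∘ e_{j'} = ev~_V, where ev~_V : V⊗V* → 1 is the right evaluation; moreover Hom_C(W_{j'},1) is one-dimensional, spanned by ev~_V ∘ i_{j'}. -/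
open CategoryTheory Category MonoidalCategory

universe v u

section Aux

open PivotalData

private lemma smul_cancel_of_ne_zero {k : Type*} [Field k] {M : Type*} [AddCommGroup M]
    [Module k M] {x : M} (hx : x ≠ 0) {a b : k} (h : a • x = b • x) : a = b := by
  by_contra hne
  apply hx
  have h0 : (a - b) • x = 0 := by rw [sub_smul, h, sub_self]
  have := congrArg (fun y => (a - b)⁻¹ • y) h0
  simpa [smul_smul, inv_mul_cancel₀ (sub_ne_zero.mpr hne)] using this

private lemma ev'_absorb {C : Type u} [Category.{v} C] [MonoidalCategory C] [PivotalData C]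
    (V : C) (g : V ⊗ dual V ⟶ 𝟙_ C) :
    ((𝟙 V ⊗≫ (V ◁ coev' V) ⊗≫ (g ▷ V) ⊗≫ 𝟙 V) ▷ dual V) ≫ ev' V = g := by
  have hz : (λ_ (dual V)).inv ≫ (coev' V ▷ dual V) ≫ (α_ (dual V) V (dual V)).hom ≫
      (dual V ◁ ev' V) ≫ (ρ_ (dual V)).hom = 𝟙 (dual V) := by
    have := zig₃ (C := C) V
    simpa [monoidalComp] using this
  calc ((𝟙 V ⊗≫ (V ◁ coev' V) ⊗≫ (g ▷ V) ⊗≫ 𝟙 V) ▷ dual V) ≫ ev' V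
      = (V ◁ ((λ_ (dual V)).inv ≫ (coev' V ▷ dual V) ≫ (α_ (dual V) V (dual V)).hom ≫
          (dual V ◁ ev' V) ≫ (ρ_ (dual V)).hom)) ≫ g := by
        simp only [monoidalComp]
        simp
        rw [whiskerRight_tensor_symm_assoc g V (dual V),
          ← MonoidalCategory.leftUnitor_naturality (ev' V)]
        simp only [Iso.inv_hom_id_assoc]
        rw [← whisker_exchange_assoc]
        simp [MonoidalCategory.unitors_equal]
    _ = g := by rw [hz]; simp

private lemma ev'_span (k : Type*) [Field k] {C : Type u} [Category.{v} C] [MonoidalCategory C]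
    [Preadditive C] [CategoryTheory.Linear k C] [MonoidalPreadditive C]
    [CategoryTheory.MonoidalLinear k C] [PivotalData C]
    (V : C) (hV : AbsSimple k V) (g : V ⊗ dual V ⟶ 𝟙_ C) :
    ∃ α : k, g = α • ev' V := by
  obtain ⟨α, hα⟩ := hV.2 (𝟙 V ⊗≫ (V ◁ coev' V) ⊗≫ (g ▷ V) ⊗≫ 𝟙 V)
  refine ⟨α, ?_⟩
  rw [← ev'_absorb V g, ← hα]
  simp

private lemma ev'_ne_zero (k : Type*) [Field k] {C : Type u} [Category.{v} C] [MonoidalCategory C]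
    [Preadditive C] [CategoryTheory.Linear k C] [MonoidalPreadditive C]
    [PivotalData C] (V : C) (hV : AbsSimple k V) : ev' V ≠ 0 := by
  intro h
  have hid : (𝟙 V : V ⟶ V) = 0 := by
    have h4 := zig₄ (C := C) V
    rw [h] at h4
    simpa [monoidalComp] using h4.symm
  have h10 : (1 : k) • (𝟙 V : V ⟶ V) = (0 : k) • 𝟙 V := by simp [hid]
  exact one_ne_zero (hV.1 h10)

end Aux

open PivotalData in
/-- With `V` absolutely simple and `V ⊗ V* = ⊕ W a` a decomposition into
indecomposables, there is a unique index `j'` with `ev'_V ∘ e_{j'} = ev'_V`; moreover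
`Hom(W j', 𝟙)` is one-dimensional, spanned by `ev'_V ∘ i_{j'}`. -/
theorem stmt4 (k : Type*) [Field k] (C : Type*) [Category C] [MonoidalCategory C]
    [Preadditive C] [CategoryTheory.Linear k C] [MonoidalPreadditive C]
    [CategoryTheory.MonoidalLinear k C] [Pivotal C]
    (V : C) (hV : AbsSimple k V)
    (ι : Type) [Fintype ι] [DecidableEq ι]
    (W : ι → C) (i : ∀ a, W a ⟶ V ⊗ dual V) (p : ∀ a, V ⊗ dual V ⟶ W a)
    (hsplit : ∀ a, i a ≫ p a = 𝟙 (W a))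
    (horth : ∀ a b, a ≠ b → i a ≫ p b = 0)
    (hsum : ∑ a : ι, p a ≫ i a = 𝟙 (V ⊗ dual V))
    (hindec : ∀ a, AbsIndec k (W a)) :
    (∃! j' : ι, (p j' ≫ i j') ≫ ev' V = ev' V) ∧
      ∀ j' : ι, (p j' ≫ i j') ≫ ev' V = ev' V →
        (i j' ≫ ev' V ≠ 0 ∧ ∀ g : W j' ⟶ 𝟙_ C, ∃ α : k, g = α • (i j' ≫ ev' V)) := by
    classical
  have hev : ev' V ≠ 0 := ev'_ne_zero k V hV
  have span : ∀ g : V ⊗ dual V ⟶ 𝟙_ C, ∃ α : k, g = α • ev' V := ev'_span k V hV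
  have cancel : ∀ {a b : k}, a • ev' V = b • ev' V → a = b :=
    fun h => smul_cancel_of_ne_zero hev h
  choose α hA using fun a => span ((p a ≫ i a) ≫ ev' V)
  have hcomp : ∀ a, i a ≫ p a ≫ i a = i a := by
    intro a; rw [← Category.assoc, hsplit, Category.id_comp]
  have horthev : ∀ a b, a ≠ b → (p a ≫ i a) ≫ ((p b ≫ i b) ≫ ev' V) = 0 := by
    intro a b hab
    have h0 : i a ≫ p b = 0 := horth a b hab
    calc (p a ≫ i a) ≫ ((p b ≫ i b) ≫ ev' V)
        = p a ≫ (i a ≫ p b) ≫ (i b ≫ ev' V) := by simp only [Category.assoc]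
      _ = 0 := by rw [h0]; simp
  have hval : ∀ a, α a * α a = α a := by
    intro a
    apply cancel
    calc (α a * α a) • ev' V = α a • (α a • ev' V) := by rw [mul_smul]
      _ = α a • ((p a ≫ i a) ≫ ev' V) := by rw [hA a]
      _ = (p a ≫ i a) ≫ (α a • ev' V) := by rw [Linear.comp_smul]
      _ = (p a ≫ i a) ≫ ((p a ≫ i a) ≫ ev' V) := by rw [hA a]
      _ = p a ≫ (i a ≫ p a ≫ i a) ≫ ev' V := by simp only [Category.assoc]
      _ = (p a ≫ i a) ≫ ev' V := by rw [hcomp a, Category.assoc]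
      _ = α a • ev' V := hA a
  have hsumev : ∑ a : ι, (p a ≫ i a) ≫ ev' V = ev' V := by
    rw [← Preadditive.sum_comp, hsum, Category.id_comp]
  have hex : ∃ j₀ : ι, α j₀ = 1 := by
    by_contra hcon
    push_neg at hcon
    have h0 : ∀ a, α a = 0 := by
      intro a
      have h01 : α a * (α a - 1) = 0 := by linear_combination hval a
      rcases mul_eq_zero.mp h01 with h | h
      · exact h
      · exact absurd (sub_eq_zero.mp h) (hcon a)
    apply hev
    rw [← hsumev]
    refine Finset.sum_eq_zero fun a _ => ?_
    rw [hA a, h0 a, zero_smul]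
  obtain ⟨j₀, hj₀⟩ := hex
  have hj₀' : (p j₀ ≫ i j₀) ≫ ev' V = ev' V := by rw [hA j₀, hj₀, one_smul]
  have huniq : ∀ y : ι, (p y ≫ i y) ≫ ev' V = ev' V → y = j₀ := by
    intro y hy
    by_contra hne
    apply hev
    have h0 := horthev y j₀ hne
    rw [hj₀', hy] at h0
    exact h0
  refine ⟨⟨j₀, hj₀', huniq⟩, ?_⟩
  intro j' hj'
  constructor
  · intro h0
    apply hev
    calc ev' V = (p j' ≫ i j') ≫ ev' V := hj'.symm
      _ = p j' ≫ (i j' ≫ ev' V) := by rw [Category.assoc]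
      _ = 0 := by rw [h0, Limits.comp_zero]
  · intro g
    obtain ⟨β, hβ⟩ := span (p j' ≫ g)
    refine ⟨β, ?_⟩
    calc g = (i j' ≫ p j') ≫ g := by rw [hsplit, Category.id_comp]
      _ = i j' ≫ p j' ≫ g := by rw [Category.assoc]
      _ = i j' ≫ (β • ev' V) := by rw [hβ]
      _ = β • (i j' ≫ ev' V) := by rw [Linear.comp_smul]
end

section
/- (Main Theorem, (1)⟺(2)) Let V be an absolutely simple object in an additive pivotal k-category in which every indecomposable object is absolutely indecomposable with nilpotent radical of the endomorphism ring. Let j and j' be the unique indices of the indecomposable summands of V⊗V* through which coev_V and ev~_V factor, respectively. Then V is right ambidextrous (i.e., f∘coev_V = (φ_V^{-1}⊗Id_{V*})∘f*∘coev~_{V*} for all f ∈ End(V⊗V*)) if and only if j = j'. -/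
open CategoryTheory Category MonoidalCategory

universe v u

section AuxDiagram

open PivotalData

variable {C : Type u} [Category.{v} C] [MonoidalCategory C]

lemma exch_aux {A B : C} (g : 𝟙_ C ⟶ A) (h : 𝟙_ C ⟶ B) :
    h ≫ (λ_ B).inv ≫ (g ▷ B) = g ≫ (ρ_ A).inv ≫ (A ◁ h) := by
  calc h ≫ (λ_ B).inv ≫ (g ▷ B)
      = (λ_ (𝟙_ C)).inv ≫ ((𝟙_ C ◁ h) ≫ (g ▷ B)) := by monoidal
    _ = (λ_ (𝟙_ C)).inv ≫ ((g ▷ 𝟙_ C) ≫ (A ◁ h)) := by rw [whisker_exchange]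
    _ = g ≫ (ρ_ A).inv ≫ (A ◁ h) := by monoidal

lemma exch2_aux {P Q : C} (f : P ⟶ 𝟙_ C) (h : Q ⟶ 𝟙_ C) :
    (f ▷ Q) ≫ (λ_ Q).hom ≫ h = (P ◁ h) ≫ (ρ_ P).hom ≫ f := by
  calc (f ▷ Q) ≫ (λ_ Q).hom ≫ h
      = ((f ▷ Q) ≫ (𝟙_ C ◁ h)) ≫ (λ_ (𝟙_ C)).hom := by monoidal
    _ = ((P ◁ h) ≫ (f ▷ 𝟙_ C)) ≫ (λ_ (𝟙_ C)).hom := by rw [← whisker_exchange]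
    _ = (P ◁ h) ≫ (ρ_ P).hom ≫ f := by monoidal

variable [Pivotal C]

lemma zig₁'_aux (V : C) :
    (λ_ V).inv ≫ (coev V ▷ V) ≫ (α_ V (dual V) V).hom ≫ (V ◁ ev V) ≫ (ρ_ V).hom = 𝟙 V := by
  rw [← zig₁ V]; monoidal

lemma zig₂'_aux (V : C) :
    (ρ_ (dual V)).inv ≫ (dual V ◁ coev V) ≫ (α_ (dual V) V (dual V)).inv ≫
      (ev V ▷ dual V) ≫ (λ_ (dual V)).hom = 𝟙 (dual V) := by
  rw [← zig₂ V]; monoidal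

lemma zig₃'_aux (V : C) :
    (λ_ (dual V)).inv ≫ (coev' V ▷ dual V) ≫ (α_ (dual V) V (dual V)).hom ≫
      (dual V ◁ ev' V) ≫ (ρ_ (dual V)).hom = 𝟙 (dual V) := by
  rw [← zig₃ V]; monoidal

lemma zig₄'_aux (V : C) :
    (ρ_ V).inv ≫ (V ◁ coev' V) ≫ (α_ V (dual V) V).inv ≫ (ev' V ▷ V) ≫ (λ_ V).hom = 𝟙 V := by
  rw [← zig₄ V]; monoidal

lemma unbendL_aux (V : C) (g : 𝟙_ C ⟶ V ⊗ dual V) :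
    coev V ≫ (((λ_ V).inv ≫ (g ▷ V) ≫ (α_ V (dual V) V).hom ≫ (V ◁ ev V) ≫ (ρ_ V).hom)
      ▷ dual V) = g := by
  calc coev V ≫ (((λ_ V).inv ≫ (g ▷ V) ≫ (α_ V (dual V) V).hom ≫ (V ◁ ev V) ≫ (ρ_ V).hom)
        ▷ dual V)
      = (coev V ≫ (λ_ (V ⊗ dual V)).inv ≫ (g ▷ (V ⊗ dual V))) ≫
          (α_ (V ⊗ dual V) V (dual V)).inv ≫ ((α_ V (dual V) V).hom ▷ dual V) ≫
          ((V ◁ ev V) ▷ dual V) ≫ ((ρ_ V).hom ▷ dual V) := by monoidal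
    _ = (g ≫ (ρ_ (V ⊗ dual V)).inv ≫ ((V ⊗ dual V) ◁ coev V)) ≫
          (α_ (V ⊗ dual V) V (dual V)).inv ≫ ((α_ V (dual V) V).hom ▷ dual V) ≫
          ((V ◁ ev V) ▷ dual V) ≫ ((ρ_ V).hom ▷ dual V) := by rw [exch_aux]
    _ = g ≫ (V ◁ ((ρ_ (dual V)).inv ≫ (dual V ◁ coev V) ≫ (α_ (dual V) V (dual V)).inv ≫
          (ev V ▷ dual V) ≫ (λ_ (dual V)).hom)) := by monoidal
    _ = g := by rw [zig₂'_aux]; simp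

lemma unbendR_aux (V : C) (g : V ⊗ dual V ⟶ 𝟙_ C) :
    (((ρ_ V).inv ≫ (V ◁ coev' V) ≫ (α_ V (dual V) V).inv ≫ (g ▷ V) ≫ (λ_ V).hom)
      ▷ dual V) ≫ ev' V = g := by
  calc (((ρ_ V).inv ≫ (V ◁ coev' V) ≫ (α_ V (dual V) V).inv ≫ (g ▷ V) ≫ (λ_ V).hom)
        ▷ dual V) ≫ ev' V
      = (((ρ_ V).inv ▷ dual V) ≫ ((V ◁ coev' V) ▷ dual V) ≫
          ((α_ V (dual V) V).inv ▷ dual V) ≫ (α_ (V ⊗ dual V) V (dual V)).hom) ≫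
          ((g ▷ (V ⊗ dual V)) ≫ (λ_ (V ⊗ dual V)).hom ≫ ev' V) := by monoidal
    _ = (((ρ_ V).inv ▷ dual V) ≫ ((V ◁ coev' V) ▷ dual V) ≫
          ((α_ V (dual V) V).inv ▷ dual V) ≫ (α_ (V ⊗ dual V) V (dual V)).hom) ≫
          (((V ⊗ dual V) ◁ ev' V) ≫ (ρ_ (V ⊗ dual V)).hom ≫ g) := by rw [exch2_aux]
    _ = (V ◁ ((λ_ (dual V)).inv ≫ (coev' V ▷ dual V) ≫ (α_ (dual V) V (dual V)).hom ≫
          (dual V ◁ ev' V) ≫ (ρ_ (dual V)).hom)) ≫ g := by monoidal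
    _ = g := by rw [zig₃'_aux]; simp

lemma phiInv_bend_aux (V : C) :
    coev' (dual V) ≫ (phiInv V ▷ dual V) = coev V := by
  calc coev' (dual V) ≫ (phiInv V ▷ dual V)
      = (coev' (dual V) ≫ (λ_ (dual (dual V) ⊗ dual V)).inv ≫
          (coev V ▷ (dual (dual V) ⊗ dual V))) ≫
          (α_ (V ⊗ dual V) (dual (dual V)) (dual V)).inv ≫
          ((α_ V (dual V) (dual (dual V))).hom ▷ dual V) ≫
          ((V ◁ ev' (dual V)) ▷ dual V) ≫ ((ρ_ V).hom ▷ dual V) := by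
        unfold phiInv; monoidal
    _ = (coev V ≫ (ρ_ (V ⊗ dual V)).inv ≫ ((V ⊗ dual V) ◁ coev' (dual V))) ≫
          (α_ (V ⊗ dual V) (dual (dual V)) (dual V)).inv ≫
          ((α_ V (dual V) (dual (dual V))).hom ▷ dual V) ≫
          ((V ◁ ev' (dual V)) ▷ dual V) ≫ ((ρ_ V).hom ▷ dual V) := by rw [exch_aux]
    _ = coev V ≫ (V ◁ ((ρ_ (dual V)).inv ≫ (dual V ◁ coev' (dual V)) ≫
          (α_ (dual V) (dual (dual V)) (dual V)).inv ≫ (ev' (dual V) ▷ dual V) ≫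
          (λ_ (dual V)).hom)) := by monoidal
    _ = coev V := by rw [zig₄'_aux]; simp

lemma mate_aux {A B : C} (f : A ⟶ B) :
    (A ◁ transpose' f) ≫ ev' A = (f ▷ dual B) ≫ ev' B := by
  calc (A ◁ transpose' f) ≫ ev' A
      = ((A ◁ (λ_ (dual B)).inv) ≫ (A ◁ (coev' A ▷ dual B)) ≫
          (A ◁ (α_ (dual A) A (dual B)).hom) ≫ (α_ A (dual A) (A ⊗ dual B)).inv) ≫
          (((A ⊗ dual A) ◁ ((f ▷ dual B) ≫ ev' B)) ≫ (ρ_ (A ⊗ dual A)).hom ≫ ev' A) := by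
        unfold transpose'; monoidal
    _ = ((A ◁ (λ_ (dual B)).inv) ≫ (A ◁ (coev' A ▷ dual B)) ≫
          (A ◁ (α_ (dual A) A (dual B)).hom) ≫ (α_ A (dual A) (A ⊗ dual B)).inv) ≫
          ((ev' A ▷ (A ⊗ dual B)) ≫ (λ_ (A ⊗ dual B)).hom ≫ ((f ▷ dual B) ≫ ev' B)) := by
        rw [← exch2_aux]
    _ = (((ρ_ A).inv ≫ (A ◁ coev' A) ≫ (α_ A (dual A) A).inv ≫ (ev' A ▷ A) ≫ (λ_ A).hom)
          ▷ dual B) ≫ (f ▷ dual B) ≫ ev' B := by monoidal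
    _ = (f ▷ dual B) ≫ ev' B := by rw [zig₄'_aux]; simp

lemma unbendD_aux (A : C) (g : 𝟙_ C ⟶ dual A) :
    coev' A ≫ (dual A ◁ ((ρ_ A).inv ≫ (A ◁ g) ≫ ev' A)) ≫ (ρ_ (dual A)).hom = g := by
  calc coev' A ≫ (dual A ◁ ((ρ_ A).inv ≫ (A ◁ g) ≫ ev' A)) ≫ (ρ_ (dual A)).hom
      = (coev' A ≫ (ρ_ (dual A ⊗ A)).inv ≫ ((dual A ⊗ A) ◁ g)) ≫
          (α_ (dual A) A (dual A)).hom ≫ (dual A ◁ ev' A) ≫ (ρ_ (dual A)).hom := by monoidal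
    _ = (g ≫ (λ_ (dual A)).inv ≫ (coev' A ▷ dual A)) ≫
          (α_ (dual A) A (dual A)).hom ≫ (dual A ◁ ev' A) ≫ (ρ_ (dual A)).hom := by
        rw [← exch_aux]
    _ = g ≫ ((λ_ (dual A)).inv ≫ (coev' A ▷ dual A) ≫ (α_ (dual A) A (dual A)).hom ≫
          (dual A ◁ ev' A) ≫ (ρ_ (dual A)).hom) := by simp only [Category.assoc]
    _ = g := by rw [zig₃'_aux]; simp

lemma coev'_gamma_aux (V : C) :
    coev' (dual V) ≫ gamma V (dual V) =
      coev' (V ⊗ dual V) ≫ (dual (V ⊗ dual V) ◁ ev' V) ≫ (ρ_ (dual (V ⊗ dual V))).hom := by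
  rw [Pivotal.gamma_eq]
  calc coev' (dual V) ≫ gamma' V (dual V)
      = (coev' (dual V) ≫ (λ_ (dual (dual V) ⊗ dual V)).inv ≫
          (coev' (V ⊗ dual V) ▷ (dual (dual V) ⊗ dual V))) ≫
          (α_ (dual (V ⊗ dual V)) (V ⊗ dual V) (dual (dual V) ⊗ dual V)).hom ≫
          (dual (V ⊗ dual V) ◁ ((α_ V (dual V) (dual (dual V) ⊗ dual V)).hom ≫
            (V ◁ (α_ (dual V) (dual (dual V)) (dual V)).inv) ≫
            (V ◁ (ev' (dual V) ▷ dual V)) ≫ (V ◁ (λ_ (dual V)).hom))) ≫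
          (dual (V ⊗ dual V) ◁ ev' V) ≫ (ρ_ (dual (V ⊗ dual V))).hom := by
        unfold gamma'; monoidal
    _ = (coev' (V ⊗ dual V) ≫ (ρ_ (dual (V ⊗ dual V) ⊗ (V ⊗ dual V))).inv ≫
          ((dual (V ⊗ dual V) ⊗ (V ⊗ dual V)) ◁ coev' (dual V))) ≫
          (α_ (dual (V ⊗ dual V)) (V ⊗ dual V) (dual (dual V) ⊗ dual V)).hom ≫
          (dual (V ⊗ dual V) ◁ ((α_ V (dual V) (dual (dual V) ⊗ dual V)).hom ≫
            (V ◁ (α_ (dual V) (dual (dual V)) (dual V)).inv) ≫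
            (V ◁ (ev' (dual V) ▷ dual V)) ≫ (V ◁ (λ_ (dual V)).hom))) ≫
          (dual (V ⊗ dual V) ◁ ev' V) ≫ (ρ_ (dual (V ⊗ dual V))).hom := by rw [exch_aux]
    _ = coev' (V ⊗ dual V) ≫ (dual (V ⊗ dual V) ◁ (V ◁ ((ρ_ (dual V)).inv ≫
          (dual V ◁ coev' (dual V)) ≫ (α_ (dual V) (dual (dual V)) (dual V)).inv ≫
          (ev' (dual V) ▷ dual V) ≫ (λ_ (dual V)).hom))) ≫
          (dual (V ⊗ dual V) ◁ ev' V) ≫ (ρ_ (dual (V ⊗ dual V))).hom := by monoidal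
    _ = coev' (V ⊗ dual V) ≫ (dual (V ⊗ dual V) ◁ ev' V) ≫
          (ρ_ (dual (V ⊗ dual V))).hom := by rw [zig₄'_aux]; simp

lemma bendD_coev'_gamma_aux (V : C) :
    (ρ_ (V ⊗ dual V)).inv ≫ ((V ⊗ dual V) ◁ (coev' (dual V) ≫ gamma V (dual V))) ≫
      ev' (V ⊗ dual V) = ev' V := by
  rw [coev'_gamma_aux]
  calc (ρ_ (V ⊗ dual V)).inv ≫ ((V ⊗ dual V) ◁ (coev' (V ⊗ dual V) ≫
          (dual (V ⊗ dual V) ◁ ev' V) ≫ (ρ_ (dual (V ⊗ dual V))).hom)) ≫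
          ev' (V ⊗ dual V)
      = ((ρ_ (V ⊗ dual V)).inv ≫ ((V ⊗ dual V) ◁ coev' (V ⊗ dual V)) ≫
          (α_ (V ⊗ dual V) (dual (V ⊗ dual V)) (V ⊗ dual V)).inv) ≫
          ((((V ⊗ dual V) ⊗ dual (V ⊗ dual V)) ◁ ev' V) ≫
            (ρ_ ((V ⊗ dual V) ⊗ dual (V ⊗ dual V))).hom ≫ ev' (V ⊗ dual V)) := by monoidal
    _ = ((ρ_ (V ⊗ dual V)).inv ≫ ((V ⊗ dual V) ◁ coev' (V ⊗ dual V)) ≫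
          (α_ (V ⊗ dual V) (dual (V ⊗ dual V)) (V ⊗ dual V)).inv) ≫
          ((ev' (V ⊗ dual V) ▷ (V ⊗ dual V)) ≫ (λ_ (V ⊗ dual V)).hom ≫ ev' V) := by
        rw [← exch2_aux]
    _ = ((ρ_ (V ⊗ dual V)).inv ≫ ((V ⊗ dual V) ◁ coev' (V ⊗ dual V)) ≫
          (α_ (V ⊗ dual V) (dual (V ⊗ dual V)) (V ⊗ dual V)).inv ≫
          (ev' (V ⊗ dual V) ▷ (V ⊗ dual V)) ≫ (λ_ (V ⊗ dual V)).hom) ≫ ev' V := by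
        simp only [Category.assoc]
    _ = ev' V := by rw [zig₄'_aux]; simp

lemma slide_aux (A : C) (f : A ⟶ A) (c : 𝟙_ C ⟶ dual A) :
    (ρ_ A).inv ≫ (A ◁ (c ≫ transpose f)) ≫ ev' A =
      f ≫ ((ρ_ A).inv ≫ (A ◁ c) ≫ ev' A) := by
  rw [Pivotal.transpose_eq]
  calc (ρ_ A).inv ≫ (A ◁ (c ≫ transpose' f)) ≫ ev' A
      = (ρ_ A).inv ≫ (A ◁ c) ≫ (A ◁ transpose' f) ≫ ev' A := by
        simp only [MonoidalCategory.whiskerLeft_comp, Category.assoc]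
    _ = (ρ_ A).inv ≫ (A ◁ c) ≫ (f ▷ dual A) ≫ ev' A := by rw [mate_aux]
    _ = (ρ_ A).inv ≫ (f ▷ 𝟙_ C) ≫ (A ◁ c) ≫ ev' A := by rw [whisker_exchange_assoc]
    _ = f ≫ ((ρ_ A).inv ≫ (A ◁ c) ≫ ev' A) := by
        rw [← rightUnitor_inv_naturality_assoc]

end AuxDiagram

open PivotalData in
/-- Main Theorem, (1)⟺(2).  Let `V` be absolutely simple in an additive
pivotal `k`-category whose indecomposables are absolutely indecomposable with nilpotent
radicals.  If `j` (resp. `j'`) is the index of the indecomposable summand of `V ⊗ V*` through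
which `coev_V` (resp. `ev'_V`) factors, then `V` is right ambidextrous iff `j = j'`. -/
theorem stmt5 (k : Type*) [Field k] (C : Type*) [Category C] [MonoidalCategory C]
    [Preadditive C] [CategoryTheory.Linear k C] [MonoidalPreadditive C]
    [CategoryTheory.MonoidalLinear k C] [Pivotal C]
    (V : C) (hV : AbsSimple k V)
    (ι : Type) [Fintype ι] [DecidableEq ι]
    (W : ι → C) (i : ∀ a, W a ⟶ V ⊗ dual V) (p : ∀ a, V ⊗ dual V ⟶ W a)
    (hsplit : ∀ a, i a ≫ p a = 𝟙 (W a))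
    (horth : ∀ a b, a ≠ b → i a ≫ p b = 0)
    (hsum : ∑ a : ι, p a ≫ i a = 𝟙 (V ⊗ dual V))
    (hindec : ∀ a, AbsIndec k (W a))
    (j j' : ι)
    (hj : coev V ≫ (p j ≫ i j) = coev V)
    (hj' : (p j' ≫ i j') ≫ ev' V = ev' V) :
    RightAmbi V ↔ j = j' := by
  
  classical
  -- every morphism 𝟙 ⟶ V ⊗ V* is a multiple of coev V
  have span_coev : ∀ g : 𝟙_ C ⟶ V ⊗ dual V, ∃ α : k, g = α • coev V := by
    intro g
    obtain ⟨α, hα⟩ := hV.2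
      ((λ_ V).inv ≫ (g ▷ V) ≫ (α_ V (dual V) V).hom ≫ (V ◁ ev V) ≫ (ρ_ V).hom)
    refine ⟨α, ?_⟩
    rw [← unbendL_aux V g, ← hα]
    simp
  have coev_inj : ∀ α β : k, α • coev V = β • coev V → α = β := by
    intro α β h
    apply hV.1
    show α • 𝟙 V = β • 𝟙 V
    have h2 : ∀ γ : k, (λ_ V).inv ≫ ((γ • coev V) ▷ V) ≫ (α_ V (dual V) V).hom ≫
        (V ◁ ev V) ≫ (ρ_ V).hom = γ • 𝟙 V := by
      intro γ
      simp [zig₁'_aux]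
    rw [← h2 α, ← h2 β, h]
  -- every morphism V ⊗ V* ⟶ 𝟙 is a multiple of ev' V
  have span_ev' : ∀ g : V ⊗ dual V ⟶ 𝟙_ C, ∃ α : k, g = α • ev' V := by
    intro g
    obtain ⟨α, hα⟩ := hV.2
      ((ρ_ V).inv ≫ (V ◁ coev' V) ≫ (α_ V (dual V) V).inv ≫ (g ▷ V) ≫ (λ_ V).hom)
    refine ⟨α, ?_⟩
    rw [← unbendR_aux V g, ← hα]
    simp
  have ev'_inj : ∀ α β : k, α • ev' V = β • ev' V → α = β := by
    intro α β h
    apply hV.1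
    show α • 𝟙 V = β • 𝟙 V
    have h2 : ∀ γ : k, (ρ_ V).inv ≫ (V ◁ coev' V) ≫ (α_ V (dual V) V).inv ≫
        ((γ • ev' V) ▷ V) ≫ (λ_ V).hom = γ • 𝟙 V := by
      intro γ
      simp [zig₄'_aux]
    rw [← h2 α, ← h2 β, h]
  choose sc hsc using span_coev
  choose se hse using span_ev'
  let lam : (V ⊗ dual V ⟶ V ⊗ dual V) → k := fun f => sc (coev V ≫ f)
  let nu : (V ⊗ dual V ⟶ V ⊗ dual V) → k := fun f => se (f ≫ ev' V)
  have hlam : ∀ f, coev V ≫ f = lam f • coev V := fun f => hsc _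
  have hnu : ∀ f, f ≫ ev' V = nu f • ev' V := fun f => hse _
  have lam_unique : ∀ f (α : k), coev V ≫ f = α • coev V → lam f = α :=
    fun f α h => coev_inj _ _ (by rw [← hlam f, h])
  have nu_unique : ∀ f (α : k), f ≫ ev' V = α • ev' V → nu f = α :=
    fun f α h => ev'_inj _ _ (by rw [← hnu f, h])
  have lam_mul : ∀ f g, lam (f ≫ g) = lam f * lam g := by
    intro f g
    apply lam_unique
    rw [← Category.assoc, hlam f, Linear.smul_comp, hlam g, smul_smul]
  have lam_add : ∀ f g, lam (f + g) = lam f + lam g := by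
    intro f g
    apply lam_unique
    rw [Preadditive.comp_add, hlam f, hlam g, ← add_smul]
  have lam_smul : ∀ (γ : k) f, lam (γ • f) = γ * lam f := by
    intro γ f
    apply lam_unique
    rw [Linear.comp_smul, hlam f, smul_smul]
  have nu_mul : ∀ f g, nu (f ≫ g) = nu f * nu g := by
    intro f g
    apply nu_unique
    rw [Category.assoc, hnu g, Linear.comp_smul, hnu f, smul_smul, mul_comm]
  have nu_add : ∀ f g, nu (f + g) = nu f + nu g := by
    intro f g
    apply nu_unique
    rw [Preadditive.add_comp, hnu f, hnu g, ← add_smul]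
  have nu_smul : ∀ (γ : k) f, nu (γ • f) = γ * nu f := by
    intro γ f
    apply nu_unique
    rw [Linear.smul_comp, hnu f, smul_smul]
  have lam_ej : lam (p j ≫ i j) = 1 := lam_unique _ _ (by rw [hj, one_smul])
  have nu_ej' : nu (p j' ≫ i j') = 1 := nu_unique _ _ (by rw [hj', one_smul])
  -- the right-hand side of the ambidexterity equation is nu f • coev V
  have hRHS : ∀ f : V ⊗ dual V ⟶ V ⊗ dual V,
      coev' (dual V) ≫ gamma V (dual V) ≫ transpose f ≫ inv (gamma V (dual V)) ≫
        (phiInv V ▷ dual V) = nu f • coev V := by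
    intro f
    have h1 := slide_aux (V ⊗ dual V) f (coev' (dual V) ≫ gamma V (dual V))
    have h2 := bendD_coev'_gamma_aux V
    have h3 : (ρ_ (V ⊗ dual V)).inv ≫
        ((V ⊗ dual V) ◁ ((coev' (dual V) ≫ gamma V (dual V)) ≫ transpose f)) ≫
        ev' (V ⊗ dual V) =
        (ρ_ (V ⊗ dual V)).inv ≫
        ((V ⊗ dual V) ◁ (nu f • (coev' (dual V) ≫ gamma V (dual V)))) ≫
        ev' (V ⊗ dual V) := by
      rw [h1, h2, hnu f]
      simp only [MonoidalLinear.whiskerLeft_smul, Linear.comp_smul, Linear.smul_comp]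
      rw [h2]
    have hc : (coev' (dual V) ≫ gamma V (dual V)) ≫ transpose f =
        nu f • (coev' (dual V) ≫ gamma V (dual V)) := by
      rw [← unbendD_aux (V ⊗ dual V) ((coev' (dual V) ≫ gamma V (dual V)) ≫ transpose f),
        ← unbendD_aux (V ⊗ dual V) (nu f • (coev' (dual V) ≫ gamma V (dual V))), h3]
    calc coev' (dual V) ≫ gamma V (dual V) ≫ transpose f ≫ inv (gamma V (dual V)) ≫
          (phiInv V ▷ dual V)
        = ((coev' (dual V) ≫ gamma V (dual V)) ≫ transpose f) ≫ inv (gamma V (dual V)) ≫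
          (phiInv V ▷ dual V) := by simp only [Category.assoc]
      _ = (nu f • (coev' (dual V) ≫ gamma V (dual V))) ≫ inv (gamma V (dual V)) ≫
          (phiInv V ▷ dual V) := by rw [hc]
      _ = nu f • coev V := by
          simp only [Linear.smul_comp, Category.assoc, IsIso.hom_inv_id_assoc]
          rw [phiInv_bend_aux]
  -- a multiplicative linear functional is determined by the local summand it lives on
  have chi_det : ∀ (χ : (V ⊗ dual V ⟶ V ⊗ dual V) → k),
      (∀ f g, χ (f ≫ g) = χ f * χ g) →
      (∀ f g, χ (f + g) = χ f + χ g) →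
      (∀ (γ : k) f, χ (γ • f) = γ * χ f) →
      ∀ a : ι, χ (p a ≫ i a) = 1 →
      ∀ (f : V ⊗ dual V ⟶ V ⊗ dual V) (α : k) (g : End (W a)),
        g = i a ≫ f ≫ p a → IsNilpotent (g - α • 1) → χ f = α := by
    intro χ hmul hadd hsmul a hone f α g hg hnil
    have hzero : χ 0 = 0 := by simpa using hsmul 0 0
    have hsum' : ∀ (s : Finset ι) (F : ι → (V ⊗ dual V ⟶ V ⊗ dual V)),
        χ (∑ b ∈ s, F b) = ∑ b ∈ s, χ (F b) := by
      intro s F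
      induction s using Finset.cons_induction with
      | empty => simpa using hzero
      | cons b s hb ih => rw [Finset.sum_cons, Finset.sum_cons, hadd, ih]
    have he0 : ∀ b, b ≠ a → χ (p b ≫ i b) = 0 := by
      intro b hb
      have h1 : (p b ≫ i b) ≫ (p a ≫ i a) = 0 := by
        have h := horth b a hb
        calc (p b ≫ i b) ≫ (p a ≫ i a) = p b ≫ (i b ≫ p a) ≫ i a := by
              simp only [Category.assoc]
          _ = 0 := by rw [h]; simp
      have h2 := hmul (p b ≫ i b) (p a ≫ i a)
      rw [h1, hzero, hone, mul_one] at h2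
      exact h2.symm
    have hterm : ∀ b c : ι, ¬(b = a ∧ c = a) →
        χ ((p b ≫ i b) ≫ f ≫ (p c ≫ i c)) = 0 := by
      intro b c hbc
      have h1 := hmul (p b ≫ i b) (f ≫ (p c ≫ i c))
      have h2 := hmul f (p c ≫ i c)
      by_cases hb : b = a
      · have hc : c ≠ a := fun h => hbc ⟨hb, h⟩
        rw [h1, h2, he0 c hc, mul_zero, mul_zero]
      · rw [h1, he0 b hb, zero_mul]
    have hf : f = ∑ b : ι, ∑ c : ι, (p b ≫ i b) ≫ f ≫ (p c ≫ i c) := by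
      calc f = (∑ b : ι, p b ≫ i b) ≫ f ≫ (∑ c : ι, p c ≫ i c) := by rw [hsum]; simp
        _ = ∑ b : ι, ∑ c : ι, (p b ≫ i b) ≫ f ≫ (p c ≫ i c) := by
            simp only [Preadditive.sum_comp, Preadditive.comp_sum]
            rw [Finset.sum_comm]
    have hchif : χ f = χ ((p a ≫ i a) ≫ f ≫ (p a ≫ i a)) := by
      conv_lhs => rw [hf]
      rw [hsum']
      calc ∑ b : ι, χ (∑ c : ι, (p b ≫ i b) ≫ f ≫ (p c ≫ i c))
          = ∑ b : ι, ∑ c : ι, χ ((p b ≫ i b) ≫ f ≫ (p c ≫ i c)) := by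
            refine Finset.sum_congr rfl fun b _ => hsum' _ _
        _ = χ ((p a ≫ i a) ≫ f ≫ (p a ≫ i a)) := by
            rw [Finset.sum_eq_single a]
            · rw [Finset.sum_eq_single a]
              · intro c _ hc
                exact hterm a c (by tauto)
              · intro h
                exact absurd (Finset.mem_univ a) h
            · intro b _ hb
              exact Finset.sum_eq_zero fun c _ => hterm b c (by tauto)
            · intro h
              exact absurd (Finset.mem_univ a) h
    -- compose-powers through the summand
    have hip : ∀ (y z : W a ⟶ W a),
        (p a ≫ y ≫ i a) ≫ (p a ≫ z ≫ i a) = p a ≫ (y ≫ z) ≫ i a := by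
      intro y z
      calc (p a ≫ y ≫ i a) ≫ (p a ≫ z ≫ i a)
          = p a ≫ y ≫ (i a ≫ p a) ≫ z ≫ i a := by simp only [Category.assoc]
        _ = p a ≫ (y ≫ z) ≫ i a := by rw [hsplit a]; simp
    obtain ⟨m, hm⟩ := hnil
    set x : End (W a) := g - α • 1 with hx
    have hpow : ∀ n : ℕ,
        χ (p a ≫ ((x ^ (n + 1) : End (W a)) : W a ⟶ W a) ≫ i a) =
          χ (p a ≫ (x : W a ⟶ W a) ≫ i a) ^ (n + 1) := by
      intro n
      induction n with
      | zero => rw [pow_one, pow_one]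
      | succ n ih =>
          have e1 : (x ^ (n + 2) : End (W a)) = ((x ^ (n + 1) : End (W a)) ≫ x : End (W a)) := by
            rw [pow_succ']
            rfl
          rw [e1, ← hip, hmul, ih, ← pow_succ]
    have hchix : χ (p a ≫ (x : W a ⟶ W a) ≫ i a) = 0 := by
      cases m with
      | zero =>
          exfalso
          apply (hindec a).1
          rw [pow_zero] at hm
          calc 𝟙 (W a) = (1 : End (W a)) := rfl
            _ = 0 := hm
      | succ m =>
          have h6 : χ (p a ≫ (x : W a ⟶ W a) ≫ i a) ^ (m + 1) = 0 := by
            rw [← hpow m, hm]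
            have : p a ≫ ((0 : End (W a)) : W a ⟶ W a) ≫ i a = 0 := by simp
            rw [this, hzero]
          exact pow_eq_zero_iff (Nat.succ_ne_zero m) |>.mp h6
    have hdecomp : (p a ≫ i a) ≫ f ≫ (p a ≫ i a) =
        α • (p a ≫ i a) + p a ≫ (x : W a ⟶ W a) ≫ i a := by
      have e2 : (p a ≫ i a) ≫ f ≫ (p a ≫ i a) = p a ≫ (i a ≫ f ≫ p a) ≫ i a := by
        simp only [Category.assoc]
      rw [e2, hx]
      have e3 : (g - α • 1 : End (W a)) =
          ((i a ≫ f ≫ p a) - α • 𝟙 (W a) : W a ⟶ W a) := by rw [hg]; rfl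
      rw [e3]
      simp only [Preadditive.comp_sub, Preadditive.sub_comp, Linear.comp_smul,
        Linear.smul_comp, Category.comp_id, Category.id_comp]
      abel
    rw [hchif, hdecomp, hadd, hsmul, hone, mul_one, hchix, add_zero]
  -- conclusion
  constructor
  · intro hamb
    have hamb' : ∀ f : V ⊗ dual V ⟶ V ⊗ dual V,
        coev V ≫ f = coev' (dual V) ≫ gamma V (dual V) ≫ transpose f ≫
          inv (gamma V (dual V)) ≫ (phiInv V ▷ dual V) := hamb
    by_contra hne
    have h1 : lam (p j ≫ i j) = nu (p j ≫ i j) := by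
      apply coev_inj
      rw [← hlam, hamb' (p j ≫ i j), hRHS]
    have h0 : (p j ≫ i j) ≫ (p j' ≫ i j') = 0 := by
      have h := horth j j' hne
      calc (p j ≫ i j) ≫ (p j' ≫ i j') = p j ≫ (i j ≫ p j') ≫ i j' := by
            simp only [Category.assoc]
        _ = 0 := by rw [h]; simp
    have h2 : nu ((p j ≫ i j) ≫ (p j' ≫ i j')) = 0 := by
      rw [h0]
      simpa using nu_smul 0 0
    have h3 := nu_mul (p j ≫ i j) (p j' ≫ i j')
    rw [h2, nu_ej', mul_one, ← h1, lam_ej] at h3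
    exact one_ne_zero h3.symm
  · intro hjj'
    subst hjj'
    show ∀ f : V ⊗ dual V ⟶ V ⊗ dual V,
        coev V ≫ f = coev' (dual V) ≫ gamma V (dual V) ≫ transpose f ≫
          inv (gamma V (dual V)) ≫ (phiInv V ▷ dual V)
    intro f
    obtain ⟨α, hα⟩ := (hindec j).2 (i j ≫ f ≫ p j)
    have hl : lam f = α := chi_det lam lam_mul lam_add lam_smul j lam_ej f α _ rfl hα
    have hn : nu f = α := chi_det nu nu_mul nu_add nu_smul j nu_ej' f α _ rfl hα
    rw [hRHS f, hlam f, hl, hn]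
end

section
/- If L is an absolutely simple projective object in an abelian pivotal k-category with enough projectives such that ev~_L : L⊗L* → 1 is an epimorphism, then the ideal generated by L equals the ideal Proj of all projective objects. -/
open CategoryTheory Category MonoidalCategory

universe v u

open PivotalData in
/-- `U` belongs to the right ideal `I_V` generated by `V`: it is a retract of `V ⊗ W`
for some `W`. -/
def InIdeal {C : Type u} [Category.{v} C] [MonoidalCategory C] (V U : C) : Prop :=
  ∃ (W : C) (α : U ⟶ V ⊗ W) (β : V ⊗ W ⟶ U), α ≫ β = 𝟙 U


section Aux13
open PivotalData
variable {C : Type u} [Category.{v} C] [MonoidalCategory C] [PivotalData C]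

/-- The left-duality data gives a Mathlib exact pairing `(V, V^*)`. -/
def pairL (V : C) : ExactPairing V (dual V) where
  coevaluation' := coev V
  evaluation' := ev V
  coevaluation_evaluation' := by
    have h := zig₂ V
    simp [monoidalComp] at h
    simpa using congrArg (fun t => (ρ_ (dual V)).hom ≫ t ≫ (λ_ (dual V)).inv) h
  evaluation_coevaluation' := by
    have h := zig₁ V
    simp [monoidalComp] at h
    simpa using congrArg (fun t => (λ_ V).hom ≫ t ≫ (ρ_ V).inv) h

/-- Right whiskering with any object preserves epimorphisms (each object is dualizable). -/
theorem epi_wr {A B : C} (e : A ⟶ B) [Epi e] (U : C) : Epi (e ▷ U) := by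
  letI := pairL U
  constructor
  intro Z g h w
  have hg : e ≫ (tensorRightHomEquiv B U (dual U) Z) g
      = (tensorRightHomEquiv A U (dual U) Z) (e ▷ U ≫ g) := by
    apply (tensorRightHomEquiv A U (dual U) Z).symm.injective
    simp [tensorRightHomEquiv_symm_naturality]
  have hh : e ≫ (tensorRightHomEquiv B U (dual U) Z) h
      = (tensorRightHomEquiv A U (dual U) Z) (e ▷ U ≫ h) := by
    apply (tensorRightHomEquiv A U (dual U) Z).symm.injective
    simp [tensorRightHomEquiv_symm_naturality]
  have : (tensorRightHomEquiv B U (dual U) Z) g = (tensorRightHomEquiv B U (dual U) Z) h := by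
    apply (cancel_epi e).mp
    rw [hg, hh, w]
  exact (tensorRightHomEquiv B U (dual U) Z).injective this

/-- Tensoring a projective object with anything on the right is projective. -/
theorem projective_tensor {P : C} (hP : Projective P) (W : C) : Projective (P ⊗ W) := by
  letI := pairL W
  constructor
  intro E X f e he
  obtain ⟨f', hf'⟩ := @Projective.factors _ _ P hP _ _
    ((tensorRightHomEquiv P W (dual W) X) f) (e ▷ dual W) (epi_wr e (dual W))
  refine ⟨(tensorRightHomEquiv P W (dual W) E).symm f', ?_⟩
  apply (tensorRightHomEquiv P W (dual W) X).injective
  rw [tensorRightHomEquiv_naturality, Equiv.apply_symm_apply, hf']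

end Aux13

open PivotalData in
/-- If `L` is an absolutely simple projective object in an abelian pivotal
`k`-category with enough projectives such that `ev'_L : L ⊗ L^* ⟶ 𝟙` is an epimorphism, then
the right ideal generated by `L` is exactly the ideal of all projective objects. -/
theorem stmt13 (k : Type*) [Field k] (C : Type*) [Category C] [MonoidalCategory C]
    [Abelian C] [CategoryTheory.Linear k C] [MonoidalPreadditive C]
    [CategoryTheory.MonoidalLinear k C] [Pivotal C] [EnoughProjectives C]
    (L : C) (hL : AbsSimple k L) (hproj : Projective L) (hepi : Epi (ev' L)) :
    ∀ U : C, InIdeal L U ↔ Projective U := by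
  intro U
  constructor
  · rintro ⟨W, a, b, hab⟩
    have hLW : Projective (L ⊗ W) := projective_tensor hproj W
    constructor
    intro E X f e he
    obtain ⟨f', hf'⟩ := @Projective.factors _ _ _ hLW _ _ (b ≫ f) e he
    exact ⟨a ≫ f', by rw [assoc, hf', ← assoc, hab, id_comp]⟩
  · intro hU
    set β : L ⊗ (dual L ⊗ U) ⟶ U :=
      (α_ L (dual L) U).inv ≫ (ev' L ▷ U) ≫ (λ_ U).hom with hβ
    have : Epi ((ev' L) ▷ U) := epi_wr (ev' L) U
    have hepiβ : Epi β := by rw [hβ]; infer_instance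
    obtain ⟨s, hs⟩ := @Projective.factors _ _ _ hU _ _ (𝟙 U) β hepiβ
    exact ⟨dual L ⊗ U, s, β, hs⟩
end

section
/- Let V be an absolutely simple object in an additive pivotal k-category satisfying the Krull–Schmidt hypotheses, and suppose j = j' (coev_V and ev~_V factor through the same indecomposable summand W_j of V⊗V*). Then for every f ∈ End(V⊗V*) with f = e_j∘f∘e_j, writing p_j∘f∘i_j = α·Id_{W_j} + r with α ∈ k and r in the radical, one has f∘coev_V = α·coev_V and ev~_V∘f = α·ev~_V. -/
open CategoryTheory Category MonoidalCategory

universe v u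

open PivotalData in
noncomputable def ep1 {C : Type u} [Category.{v} C] [MonoidalCategory C] [PivotalData C] (V : C) :
    ExactPairing V (dual V) where
  coevaluation' := coev V
  evaluation' := ev V
  coevaluation_evaluation' := by
    have h := zig₂ (C := C) V
    calc dual V ◁ coev V ≫ (α_ _ _ _).inv ≫ ev V ▷ dual V
        = (ρ_ (dual V)).hom ≫ (𝟙 (dual V) ⊗≫ (dual V ◁ coev V) ⊗≫ (ev V ▷ dual V) ⊗≫ 𝟙 (dual V)) ≫ (λ_ (dual V)).inv := by
          monoidal
      _ = (ρ_ (dual V)).hom ≫ (λ_ (dual V)).inv := by rw [h]; simp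
  evaluation_coevaluation' := by
    have h := zig₁ (C := C) V
    calc coev V ▷ V ≫ (α_ _ _ _).hom ≫ V ◁ ev V
        = (λ_ V).hom ≫ (𝟙 V ⊗≫ (coev V ▷ V) ⊗≫ (V ◁ ev V) ⊗≫ 𝟙 V) ≫ (ρ_ V).inv := by
          monoidal
      _ = (λ_ V).hom ≫ (ρ_ V).inv := by rw [h]; simp

open PivotalData in
noncomputable def ep2 {C : Type u} [Category.{v} C] [MonoidalCategory C] [PivotalData C] (V : C) :
    ExactPairing (dual V) V where
  coevaluation' := coev' V
  evaluation' := ev' V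
  coevaluation_evaluation' := by
    have h := zig₄ (C := C) V
    calc V ◁ coev' V ≫ (α_ _ _ _).inv ≫ ev' V ▷ V
        = (ρ_ V).hom ≫ (𝟙 V ⊗≫ (V ◁ coev' V) ⊗≫ (ev' V ▷ V) ⊗≫ 𝟙 V) ≫ (λ_ V).inv := by
          monoidal
      _ = (ρ_ V).hom ≫ (λ_ V).inv := by rw [h]; simp
  evaluation_coevaluation' := by
    have h := zig₃ (C := C) V
    calc coev' V ▷ dual V ≫ (α_ _ _ _).hom ≫ dual V ◁ ev' V
        = (λ_ (dual V)).hom ≫ (𝟙 (dual V) ⊗≫ (coev' V ▷ dual V) ⊗≫ (dual V ◁ ev' V) ⊗≫ 𝟙 (dual V)) ≫ (ρ_ (dual V)).inv := by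
          monoidal
      _ = (λ_ (dual V)).hom ≫ (ρ_ (dual V)).inv := by rw [h]; simp

section Aux
open PivotalData
variable {k : Type*} [Field k] {C : Type u} [Category.{v} C] [MonoidalCategory C]
  [Preadditive C] [CategoryTheory.Linear k C] [MonoidalPreadditive C]
  [CategoryTheory.MonoidalLinear k C] [PivotalData C]

set_option linter.unusedSectionVars false in
theorem id_ne_zero (V : C) (hV : AbsSimple k V) : (𝟙 V : V ⟶ V) ≠ 0 := by
  intro h
  have := hV.injective (a₁ := (0 : k)) (a₂ := 1) (by simp [h])
  exact one_ne_zero this.symm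

theorem coev_ne_zero (V : C) (hV : AbsSimple k V) : coev V ≠ 0 := by
  intro h0
  have h := zig₁ (C := C) V
  rw [h0] at h
  simp [monoidalComp] at h
  exact id_ne_zero V hV h.symm

theorem ev'_ne_zero_s18 (V : C) (hV : AbsSimple k V) : ev' V ≠ 0 := by
  intro h0
  have h := zig₄ (C := C) V
  rw [h0] at h
  simp [monoidalComp] at h
  exact id_ne_zero V hV h.symm

theorem span_coev (V : C) (hV : AbsSimple k V) (x : 𝟙_ C ⟶ V ⊗ dual V) :
    ∃ β : k, x = β • coev V := by
  letI := ep1 V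
  have key : ∀ x : 𝟙_ C ⟶ V ⊗ dual V, ∃ β : k,
      x = β • (tensorRightHomEquiv (𝟙_ C) V (dual V) V (λ_ V).hom) := by
    intro x
    obtain ⟨β, hβ⟩ := hV.surjective
      ((λ_ V).inv ≫ (tensorRightHomEquiv (𝟙_ C) V (dual V) V).symm x)
    refine ⟨β, ?_⟩
    have hx : (tensorRightHomEquiv (𝟙_ C) V (dual V) V).symm x = β • (λ_ V).hom := by
      have := congrArg (fun t => (λ_ V).hom ≫ t) hβ
      simpa using this.symm
    have := congrArg (tensorRightHomEquiv (𝟙_ C) V (dual V) V) hx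
    rw [Equiv.apply_symm_apply] at this
    rw [this]
    simp [tensorRightHomEquiv, Linear.smul_comp, Linear.comp_smul]
  obtain ⟨β₀, h₀⟩ := key (coev V)
  obtain ⟨β, hβ⟩ := key x
  have hβ₀ : β₀ ≠ 0 := by
    intro h
    exact coev_ne_zero V hV (by rw [h₀, h, zero_smul])
  refine ⟨β * β₀⁻¹, ?_⟩
  rw [hβ, h₀, smul_smul]
  congr 1
  field_simp

theorem span_ev' (V : C) (hV : AbsSimple k V) (y : V ⊗ dual V ⟶ 𝟙_ C) :
    ∃ β : k, y = β • ev' V := by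
  letI := ep2 V
  have key : ∀ y : V ⊗ dual V ⟶ 𝟙_ C, ∃ β : k,
      y = β • (tensorRightHomEquiv V (dual V) V (𝟙_ C)).symm (λ_ V).inv := by
    intro y
    obtain ⟨β, hβ⟩ := hV.surjective
      ((tensorRightHomEquiv V (dual V) V (𝟙_ C)) y ≫ (λ_ V).hom)
    refine ⟨β, ?_⟩
    have hx : (tensorRightHomEquiv V (dual V) V (𝟙_ C)) y = β • (λ_ V).inv := by
      have := congrArg (fun t => t ≫ (λ_ V).inv) hβ
      simpa using this.symm
    have := congrArg (tensorRightHomEquiv V (dual V) V (𝟙_ C)).symm hx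
    rw [Equiv.symm_apply_apply] at this
    rw [this]
    simp [tensorRightHomEquiv, Linear.smul_comp, Linear.comp_smul]
  obtain ⟨β₀, h₀⟩ := key (ev' V)
  obtain ⟨β, hβ⟩ := key y
  have hβ₀ : β₀ ≠ 0 := by
    intro h
    exact ev'_ne_zero_s18 V hV (by rw [h₀, h, zero_smul])
  refine ⟨β * β₀⁻¹, ?_⟩
  rw [hβ, h₀, smul_smul]
  congr 1
  field_simp

end Aux
open PivotalData in
/-- Suppose `coev_V` and `ev'_V` factor through the same indecomposable
summand `W j` of `V ⊗ V*`.  Then for every `f ∈ End(V ⊗ V*)` with `f = e_j ∘ f ∘ e_j`,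
writing `p_j ∘ f ∘ i_j = α • Id + r` with `r` in the (nilpotent) radical, one has
`f ∘ coev_V = α • coev_V` and `ev'_V ∘ f = α • ev'_V`. -/
theorem stmt18 (k : Type*) [Field k] (C : Type*) [Category C] [MonoidalCategory C]
    [Preadditive C] [CategoryTheory.Linear k C] [MonoidalPreadditive C]
    [CategoryTheory.MonoidalLinear k C] [Pivotal C]
    (V : C) (hV : AbsSimple k V)
    (ι : Type) [Fintype ι] [DecidableEq ι]
    (W : ι → C) (i : ∀ a, W a ⟶ V ⊗ dual V) (p : ∀ a, V ⊗ dual V ⟶ W a)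
    (hsplit : ∀ a, i a ≫ p a = 𝟙 (W a))
    (horth : ∀ a b, a ≠ b → i a ≫ p b = 0)
    (hsum : ∑ a : ι, p a ≫ i a = 𝟙 (V ⊗ dual V))
    (hindec : ∀ a, AbsIndec k (W a))
    (j : ι)
    (hj : coev V ≫ (p j ≫ i j) = coev V)
    (hj' : (p j ≫ i j) ≫ ev' V = ev' V)
    (f : V ⊗ dual V ⟶ V ⊗ dual V)
    (hf : f = (p j ≫ i j) ≫ f ≫ (p j ≫ i j))
    (α : k)
    (hα : IsNilpotent (show End (W j) from i j ≫ f ≫ p j - α • 𝟙 (W j))) :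
    coev V ≫ f = α • coev V ∧ f ≫ ev' V = α • ev' V := by
  set x : 𝟙_ C ⟶ W j := coev V ≫ p j with hxdef
  have hxij : x ≫ i j = coev V := by rw [hxdef, Category.assoc]; exact hj
  have hx0 : x ≠ 0 := fun h => coev_ne_zero V hV (by rw [← hxij, h, Limits.zero_comp])
  set y : W j ⟶ 𝟙_ C := i j ≫ ev' V with hydef
  have hpjy : p j ≫ y = ev' V := by rw [hydef, ← Category.assoc]; exact hj'
  have hy0 : y ≠ 0 := fun h => ev'_ne_zero_s18 V hV (by rw [← hpjy, h, Limits.comp_zero])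
  have spanWx : ∀ z : 𝟙_ C ⟶ W j, ∃ β : k, z = β • x := by
    intro z
    obtain ⟨β, hβ⟩ := span_coev V hV (z ≫ i j)
    refine ⟨β, ?_⟩
    have hz : z = (z ≫ i j) ≫ p j := by rw [Category.assoc, hsplit, Category.comp_id]
    rw [hz, hβ, Linear.smul_comp, hxdef]
  have spanWy : ∀ z : W j ⟶ 𝟙_ C, ∃ β : k, z = β • y := by
    intro z
    obtain ⟨β, hβ⟩ := span_ev' V hV (p j ≫ z)
    refine ⟨β, ?_⟩
    have hz : z = i j ≫ p j ≫ z := by rw [← Category.assoc, hsplit, Category.id_comp]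
    rw [hz, hβ, Linear.comp_smul, hydef]
  obtain ⟨n, hn⟩ := hα
  set rE : End (W j) := (i j ≫ f ≫ p j - α • 𝟙 (W j) : W j ⟶ W j) with hrdef
  have hn2 : rE ^ n = 0 := hn
  have hxr : x ≫ (rE : W j ⟶ W j) = 0 := by
    obtain ⟨β, hβ⟩ := spanWx (x ≫ (rE : W j ⟶ W j))
    have hpow : ∀ m : ℕ, x ≫ (rE ^ m : W j ⟶ W j) = β ^ m • x := by
      intro m
      induction m with
      | zero => simp [pow_zero, End.one_def]
      | succ m ih =>
        have hmul : (rE ^ (m + 1) : W j ⟶ W j) =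
            (rE : W j ⟶ W j) ≫ (rE ^ m : W j ⟶ W j) := by
          rw [pow_succ]; rfl
        rw [hmul, ← Category.assoc, hβ, Linear.smul_comp, ih, smul_smul, ← pow_succ']
    have h0 : β ^ n • x = 0 := by
      rw [← hpow n, hn2]; exact Limits.comp_zero
    have hβ0 : β = 0 := by
      by_contra hb
      refine hx0 ?_
      have := congrArg (fun t => (β ^ n)⁻¹ • t) h0
      simpa [smul_smul, inv_mul_cancel₀ (pow_ne_zero n hb)] using this
    rw [hβ, hβ0, zero_smul]
  have hry : (rE : W j ⟶ W j) ≫ y = 0 := by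
    obtain ⟨β, hβ⟩ := spanWy ((rE : W j ⟶ W j) ≫ y)
    have hpow : ∀ m : ℕ, (rE ^ m : W j ⟶ W j) ≫ y = β ^ m • y := by
      intro m
      induction m with
      | zero => simp [pow_zero, End.one_def]
      | succ m ih =>
        have hmul : (rE ^ (m + 1) : W j ⟶ W j) =
            (rE : W j ⟶ W j) ≫ (rE ^ m : W j ⟶ W j) := by
          rw [pow_succ]; rfl
        rw [hmul, Category.assoc, ih, Linear.comp_smul, hβ, smul_smul, mul_comm, ← pow_succ']
    have h0 : β ^ n • y = 0 := by
      rw [← hpow n, hn2]; exact Limits.zero_comp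
    have hβ0 : β = 0 := by
      by_contra hb
      refine hy0 ?_
      have := congrArg (fun t => (β ^ n)⁻¹ • t) h0
      simpa [smul_smul, inv_mul_cancel₀ (pow_ne_zero n hb)] using this
    rw [hβ, hβ0, zero_smul]
  have hxg : x ≫ (i j ≫ f ≫ p j) = α • x := by
    have h := hxr
    rw [hrdef] at h
    rw [Preadditive.comp_sub, Linear.comp_smul, Category.comp_id, sub_eq_zero] at h
    exact h
  have hgy : (i j ≫ f ≫ p j) ≫ y = α • y := by
    have h := hry
    rw [hrdef] at h
    rw [Preadditive.sub_comp, Linear.smul_comp, Category.id_comp, sub_eq_zero] at h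
    exact h
  constructor
  · conv_lhs => rw [hf]
    calc coev V ≫ (p j ≫ i j) ≫ f ≫ (p j ≫ i j)
        = (x ≫ (i j ≫ f ≫ p j)) ≫ i j := by
          rw [hxdef]; simp only [Category.assoc]
      _ = (α • x) ≫ i j := by rw [hxg]
      _ = α • coev V := by rw [Linear.smul_comp, hxij]
  · conv_lhs => rw [hf]
    calc ((p j ≫ i j) ≫ f ≫ (p j ≫ i j)) ≫ ev' V
        = p j ≫ (i j ≫ f ≫ p j) ≫ y := by
          rw [hydef]; simp only [Category.assoc]
      _ = p j ≫ (α • y) := by rw [hgy]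
      _ = α • ev' V := by rw [Linear.comp_smul, hpjy]
end
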